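/- Let n = 2p with p > 2 prime, and let f be a monomial rotation symmetric Boolean function in n variables generated by x₀x_{a₁}⋯x_{a_{d-1}} whose orbit has exactly p monomials. Then d is even and every monomial of f contains the variables in pairs {x_j, x_{j+p}}; i.e., f has short ANF x₀x_{a₁}⋯x_{a_{g-1}} x_p x_{p+a₁}⋯x_{p+a_{g-1}} with d = 2g and 0 < a₁ < ⋯ < a_{g-1} < p. -/

import Mathlib

/-!
The translates `S + j` form the orbit of `S` under `ℤ/2p` acting on itself by translation, so by
orbit–stabilizer the stabilizer of `S` has order `2p / p = 2`. Its nonzero element `h` satisfies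
`h + h = 0`, which in `ℤ/2p` forces `h = p`; hence `S + p = S`, and translation by `p` pairs off
the elements of `S`, so `|S|` is even.
-/

open Finset Pointwise

theorem card_image_add_right_mul_card_stabilizer {G : Type*} [AddCommGroup G] [Fintype G]
    [DecidableEq G] (S : Finset G) :
    #(univ.image fun j => S.image (· + j)) * Nat.card (AddAction.stabilizer G S) =
      Fintype.card G := by
  have horbit : ((univ.image fun j => S.image (· + j) : Finset (Finset G)) : Set (Finset G)) =
      AddAction.orbit G S := by
    ext T
    simp [AddAction.mem_orbit_iff, Finset.vadd_finset_def, add_comm]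
  rw [← Set.ncard_coe_finset, horbit, ← AddAction.index_stabilizer, mul_comm,
    AddSubgroup.card_mul_index, Nat.card_eq_fintype_card]

theorem exists_ne_zero_add_self_eq_zero_of_card_eq_two {G : Type*} [AddGroup G]
    (hG : Nat.card G = 2) : ∃ x : G, x ≠ 0 ∧ x + x = 0 := by
  have : Finite G := Nat.finite_of_card_ne_zero (by omega)
  have : Nontrivial G := Finite.one_lt_card_iff_nontrivial.mp (by omega)
  obtain ⟨x, hx⟩ := exists_ne (0 : G)
  exact ⟨x, hx, by rw [← two_nsmul, ← hG, card_nsmul_eq_zero']⟩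

theorem Fin.val_add_val_eq_of_add_self_eq_zero {n : ℕ} [NeZero n] {x : Fin n} (hx0 : x ≠ 0)
    (hx : x + x = 0) : x.val + x.val = n := by
  have hpos : x.val ≠ 0 := fun h => hx0 (Fin.ext h)
  have hmod : (x.val + x.val) % n = 0 := by simpa [Fin.ext_iff, Fin.val_add] using hx
  have hlt := x.isLt
  rcases Nat.lt_or_ge (x.val + x.val) n with hsmall | hbig
  · rw [Nat.mod_eq_of_lt hsmall] at hmod; omega
  · rw [Nat.mod_eq_sub_mod hbig, Nat.mod_eq_of_lt (by omega)] at hmod; omega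

theorem Finset.even_card_of_add_mem {G : Type*} [AddGroup G] [DecidableEq G] {S : Finset G}
    {t : G} (ht0 : t ≠ 0) (htt : t + t = 0) (hS : ∀ j ∈ S, j + t ∈ S) : Even #S := by
  have hinv : ∀ j : G, j + t + t = j := fun j => by rw [add_assoc, htt, add_zero]
  let σ : Equiv.Perm S :=
    { toFun j := ⟨j + t, hS _ j.2⟩
      invFun j := ⟨j + t, hS _ j.2⟩
      left_inv j := Subtype.ext (hinv j)
      right_inv j := Subtype.ext (hinv j) }
  have hσ : σ ^ 2 ^ 1 = 1 := by
    ext j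
    simp [σ, pow_two, hinv]
  have hsupp : σ.support = univ := by
    ext j
    simpa [σ, Equiv.Perm.mem_support, Subtype.ext_iff] using ht0
  -- the points outside the support of a `2`-power-order permutation have the parity of `|S|`
  have := Equiv.Perm.card_compl_support_modEq (p := 2) (n := 1) (hp := ⟨Nat.prime_two⟩) hσ
  rw [hsupp, compl_univ, card_empty, Fintype.card_coe] at this
  exact Nat.even_iff.mpr this.symm

theorem stmt18 (p : ℕ) (hp2 : 2 < p) (S : Finset (Fin (2*p)))
    (horb : (Finset.univ.image (fun j : Fin (2*p) => S.image (· + j))).card = p) :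
    Even S.card ∧ ∀ j ∈ S, j + (⟨p, by omega⟩ : Fin (2*p)) ∈ S := by
  have : NeZero (2*p) := ⟨by omega⟩
  set q : Fin (2*p) := ⟨p, by omega⟩
  have hK : Nat.card (AddAction.stabilizer (Fin (2*p)) S) = 2 := by
    have := card_image_add_right_mul_card_stabilizer S
    rw [horb, Fintype.card_fin] at this
    exact Nat.eq_of_mul_eq_mul_left (by omega : 0 < p) (by rw [this, mul_comm])
  obtain ⟨⟨h, hstab⟩, hh0, hhh⟩ := exists_ne_zero_add_self_eq_zero_of_card_eq_two hK
  replace hh0 : h ≠ 0 := by simpa using hh0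
  replace hhh : h + h = 0 := by simpa using congrArg Subtype.val hhh
  obtain rfl : h = q :=
    Fin.ext (by have := Fin.val_add_val_eq_of_add_self_eq_zero hh0 hhh; simp only [q]; omega)
  have hpair : ∀ j ∈ S, j + q ∈ S := fun j hj => by
    rw [add_comm]; exact AddAction.mem_stabilizer_finset'.mp hstab hj
  exact ⟨Finset.even_card_of_add_mem hh0 hhh hpair, hpair⟩
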